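/- Let {(G_i|J_i)} be an isometric amalgamation family with amalgamation H. If dim_l(H) = Σ_i dim_l(G_i), then any two local metric bases B_i of G_i and B_j of G_j with i ≠ j are disjoint (as subsets of V(H)). -/
import Mathlib

open SimpleGraph

/-- `S` is a local metric set for `G`: every pair of adjacent vertices is
distinguished (by distance) by some vertex of `S`. -/
def IsLocalMetricSet {V : Type*} (G : SimpleGraph V) (S : Set V) : Prop :=
  ∀ u v : V, G.Adj u v → ∃ s ∈ S, G.dist s u ≠ G.dist s v

/-- The local metric dimension of `G`: the minimum cardinality of a local metric set. -/
noncomputable def localMetricDim {V : Type*} (G : SimpleGraph V) : ℕ :=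
  sInf {n | ∃ S : Set V, S.ncard = n ∧ IsLocalMetricSet G S}

/-- `H` is the subgraph-amalgamation of the family `G i` over the common induced
subgraph `J`, via induced embeddings `e i : J → G i` and `f i : G i → H`. -/
structure IsAmalgamation {ι VJ W : Type*} {Vg : ι → Type*}
    (J : SimpleGraph VJ) (G : ∀ i, SimpleGraph (Vg i)) (H : SimpleGraph W)
    (e : ∀ i, VJ → Vg i) (f : ∀ i, Vg i → W) : Prop where
  e_inj : ∀ i, Function.Injective (e i)
  e_ind : ∀ i a b, (G i).Adj (e i a) (e i b) ↔ J.Adj a b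
  f_inj : ∀ i, Function.Injective (f i)
  f_ind : ∀ i x y, H.Adj (f i x) (f i y) ↔ (G i).Adj x y
  compat : ∀ i j a, f i (e i a) = f j (e j a)
  inter : ∀ i j x y, i ≠ j → f i x = f j y → ∃ a, x = e i a ∧ y = e j a
  cover : ∀ w, ∃ i x, f i x = w
  edge_mem : ∀ x y, H.Adj x y → ∃ i a b, x = f i a ∧ y = f i b

lemma univ_isLocalMetricSet {V : Type*} (G : SimpleGraph V) :
    IsLocalMetricSet G Set.univ := by
  intro u v h
  refine ⟨u, Set.mem_univ u, ?_⟩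
  rw [SimpleGraph.dist_self]
  intro hc
  rcases SimpleGraph.dist_eq_zero_iff_eq_or_not_reachable.mp hc.symm with h1 | h1
  · exact h.ne h1
  · exact h1 h.reachable

lemma exists_localMetricBasis {V : Type*} (G : SimpleGraph V) :
    ∃ S : Set V, S.ncard = localMetricDim G ∧ IsLocalMetricSet G S := by
  have : localMetricDim G ∈ {n | ∃ S : Set V, S.ncard = n ∧ IsLocalMetricSet G S} :=
    Nat.sInf_mem ⟨_, Set.univ, rfl, univ_isLocalMetricSet G⟩
  obtain ⟨S, hS1, hS2⟩ := this
  exact ⟨S, hS1, hS2⟩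

lemma ncard_biUnion_le' {α : Type*} [Fintype α] {ι : Type*} (s : Finset ι) (t : ι → Set α) :
    (⋃ k ∈ s, t k).ncard ≤ ∑ k ∈ s, (t k).ncard := by
  classical
  induction s using Finset.induction with
  | empty => simp
  | @insert a s h ih =>
    rw [Finset.sum_insert h, Finset.set_biUnion_insert]
    calc (t a ∪ ⋃ k ∈ s, t k).ncard ≤ (t a).ncard + (⋃ k ∈ s, t k).ncard :=
          Set.ncard_union_le _ _
      _ ≤ _ := by omega

/-- For an isometric amalgamation, if `dim_l(H) = Σ dim_l(G i)`, then any two local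
metric bases of distinct `G i`, `G j` are disjoint as subsets of `V(H)`. -/
theorem stmt_13 {ι VJ W : Type*} {Vg : ι → Type*} [Fintype ι] [Fintype W] [∀ i, Fintype (Vg i)]
    (J : SimpleGraph VJ) (G : ∀ i, SimpleGraph (Vg i)) (H : SimpleGraph W)
    (e : ∀ i, VJ → Vg i) (f : ∀ i, Vg i → W)
    (amal : IsAmalgamation J G H e f)
    (hGconn : ∀ i, (G i).Connected)
    (hiso : ∀ i (x y : Vg i), (G i).dist x y = H.dist (f i x) (f i y))
    (hdim : localMetricDim H = ∑ i, localMetricDim (G i))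
    (i j : ι) (hij : i ≠ j)
    (Bi : Set (Vg i)) (Bj : Set (Vg j))
    (hBi : IsLocalMetricSet (G i) Bi) (hBicard : Bi.ncard = localMetricDim (G i))
    (hBj : IsLocalMetricSet (G j) Bj) (hBjcard : Bj.ncard = localMetricDim (G j)) :
    Disjoint (f i '' Bi) (f j '' Bj) := by
  classical
  by_contra hnd
  rw [Set.not_disjoint_iff] at hnd
  obtain ⟨w, hwi, hwj⟩ := hnd
  have hex : ∀ k, ∃ S : Set (Vg k), S.ncard = localMetricDim (G k) ∧ IsLocalMetricSet (G k) S :=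
    fun k => exists_localMetricBasis (G k)
  choose C hC1 hC2 using hex
  set s : Finset ι := (Finset.univ.erase i).erase j with hs
  set B : Set W := (f i '' Bi ∪ f j '' Bj) ∪ ⋃ k ∈ s, f k '' C k with hB
  have hBlms : IsLocalMetricSet H B := by
    intro u v huv
    obtain ⟨k, a, b, rfl, rfl⟩ := amal.edge_mem u v huv
    have hadj : (G k).Adj a b := (amal.f_ind k a b).mp huv
    by_cases hk : k = i
    · subst hk
      obtain ⟨t, ht, htd⟩ := hBi a b hadj
      exact ⟨f k t, Or.inl (Or.inl ⟨t, ht, rfl⟩), by rw [← hiso, ← hiso]; exact htd⟩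
    by_cases hk2 : k = j
    · subst hk2
      obtain ⟨t, ht, htd⟩ := hBj a b hadj
      exact ⟨f k t, Or.inl (Or.inr ⟨t, ht, rfl⟩), by rw [← hiso, ← hiso]; exact htd⟩
    · obtain ⟨t, ht, htd⟩ := hC2 k a b hadj
      refine ⟨f k t, Or.inr ?_, by rw [← hiso, ← hiso]; exact htd⟩
      exact Set.mem_biUnion (Finset.mem_erase.mpr ⟨hk2, Finset.mem_erase.mpr ⟨hk, Finset.mem_univ k⟩⟩) ⟨t, ht, rfl⟩
  have hle : localMetricDim H ≤ B.ncard := Nat.sInf_le ⟨B, rfl, hBlms⟩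
  have hpair : (f i '' Bi ∪ f j '' Bj).ncard + 1 ≤
      localMetricDim (G i) + localMetricDim (G j) := by
    have heq := Set.ncard_union_add_ncard_inter (f i '' Bi) (f j '' Bj)
    have hinter : 0 < ((f i '' Bi) ∩ (f j '' Bj)).ncard :=
      (Set.ncard_pos (Set.toFinite _)).mpr ⟨w, hwi, hwj⟩
    have h1 : (f i '' Bi).ncard = localMetricDim (G i) := by
      rw [Set.ncard_image_of_injective _ (amal.f_inj i), hBicard]
    have h2 : (f j '' Bj).ncard = localMetricDim (G j) := by
      rw [Set.ncard_image_of_injective _ (amal.f_inj j), hBjcard]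
    omega
  have hrest : (⋃ k ∈ s, f k '' C k).ncard ≤ ∑ k ∈ s, localMetricDim (G k) := by
    refine le_trans (ncard_biUnion_le' s _) (Finset.sum_le_sum fun k _ => ?_)
    rw [Set.ncard_image_of_injective _ (amal.f_inj k), hC1 k]
  have hsplit1 : localMetricDim (G i) + ∑ k ∈ Finset.univ.erase i, localMetricDim (G k) =
      ∑ k, localMetricDim (G k) :=
    Finset.add_sum_erase Finset.univ (fun k => localMetricDim (G k)) (Finset.mem_univ i)
  have hsplit2 : localMetricDim (G j) + ∑ k ∈ (Finset.univ.erase i).erase j, localMetricDim (G k) =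
      ∑ k ∈ Finset.univ.erase i, localMetricDim (G k) :=
    Finset.add_sum_erase _ (fun k => localMetricDim (G k)) (Finset.mem_erase.mpr ⟨Ne.symm hij, Finset.mem_univ j⟩)
  rw [hs] at hrest
  have hBcard : B.ncard ≤ (f i '' Bi ∪ f j '' Bj).ncard + (⋃ k ∈ s, f k '' C k).ncard :=
    Set.ncard_union_le _ _
  rw [hs] at hBcard
  rw [hdim] at hle
  omega
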